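/- arXiv:2601.18854 — 3 statements merged into one kernel-verified Lean document; each statement's English description precedes it below -/
import Mathlib

section
/- For the strain-limiting constitutive function ε(τ) = (τ/E) / (1 + (β|τ|)^α)^(1/α) with E, α, β > 0, the strain is uniformly bounded: |ε(τ)| < 1/(Eβ) for all real τ. -/
theorem strain_limiting_bounded (E α β : ℝ) (hE : 0 < E) (hα : 0 < α) (hβ : 0 < β)
    (ε : ℝ → ℝ) (hε : ∀ τ, ε τ = (τ / E) * (1 + (β * |τ|) ^ α) ^ (-1 / α)) :
    ∀ τ : ℝ, |ε τ| < 1 / (E * β) := by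
  intro τ
  rw [hε]
  set x : ℝ := β * |τ| with hx
  have hx0 : 0 ≤ x := by positivity
  have hp : (0:ℝ) < 1 + x ^ α := by positivity
  have hkey : x < (1 + x ^ α) ^ (1/α) :=
    calc x = (x ^ α) ^ (1/α) := by
            rw [← Real.rpow_mul hx0, mul_one_div, div_self hα.ne', Real.rpow_one]
      _ < (1 + x ^ α) ^ (1/α) :=
            Real.rpow_lt_rpow (by positivity) (lt_one_add _) (by positivity)
  have hnegp : (1 + x ^ α) ^ (-1/α) = ((1 + x ^ α) ^ (1/α))⁻¹ := by
    rw [neg_div, Real.rpow_neg hp.le]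
  rw [hnegp, abs_mul, abs_inv, abs_div,
    abs_of_pos (Real.rpow_pos_of_pos hp _), abs_of_pos hE]
  rw [← div_eq_mul_inv, div_div, div_lt_div_iff₀ (by positivity) (by positivity)]
  calc |τ| * (E * β) = E * x := by rw [hx]; ring
    _ < E * ((1 + x ^ α) ^ (1/α)) := by exact mul_lt_mul_of_pos_left hkey hE
    _ = 1 * (E * (1 + x ^ α) ^ (1/α)) := by ring
end

section
/- The strain-limiting function depends only on γ = Eβ up to scaling: writing ε(τ) = (τ/E)(1+(βτ)^α)^(-1/α), the strain limit sup over τ ≥ 0 of ε(τ) equals 1/γ where γ = Eβ; that is, sSup (ε '' [0,∞)) = 1/(Eβ). -/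
open Filter Real Set

theorem strain_limiting_sSup (E α β : ℝ) (hE : 0 < E) (hα : 0 < α) (hβ : 0 < β)
    (γ : ℝ) (hγ : γ = E * β)
    (ε : ℝ → ℝ) (hε : ∀ τ, ε τ = (τ / E) * (1 + (β * τ) ^ α) ^ (-1 / α)) :
    sSup (ε '' Set.Ici 0) = 1 / γ := by
  have hγ0 : 0 < γ := by rw [hγ]; positivity
  -- key rewriting
  have key : ∀ τ : ℝ, 0 ≤ τ →
      ε τ = (1 / γ) * ((β * τ) ^ α / (1 + (β * τ) ^ α)) ^ (1 / α) := by
    intro τ hτ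
    have hbt : 0 ≤ β * τ := mul_nonneg hβ.le hτ
    have hXnn : 0 ≤ (β * τ) ^ α := Real.rpow_nonneg hbt α
    have hX : (0:ℝ) < 1 + (β * τ) ^ α := by linarith
    rw [hε, hγ, Real.div_rpow hXnn hX.le, one_div α,
      Real.rpow_rpow_inv hbt hα.ne', ← one_div α, neg_div, Real.rpow_neg hX.le]
    have h1 : ((1 + (β * τ) ^ α) ^ (1/α)) ≠ 0 :=
      (Real.rpow_pos_of_pos hX _).ne'
    field_simp
  have hub : ∀ x ∈ ε '' Set.Ici 0, x ≤ 1 / γ := by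
    rintro x ⟨τ, hτ, rfl⟩
    rw [key τ hτ]
    have hbt : 0 ≤ β * τ := mul_nonneg hβ.le hτ
    have hXnn : 0 ≤ (β * τ) ^ α := Real.rpow_nonneg hbt α
    have hX : (0:ℝ) < 1 + (β * τ) ^ α := by linarith
    have hle1 : ((β * τ) ^ α / (1 + (β * τ) ^ α)) ^ (1/α) ≤ 1 := by
      apply Real.rpow_le_one (by positivity) _ (by positivity)
      rw [div_le_one hX]; linarith
    calc (1/γ) * ((β * τ) ^ α / (1 + (β * τ) ^ α)) ^ (1/α)
        ≤ (1/γ) * 1 := by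
          apply mul_le_mul_of_nonneg_left hle1 (by positivity)
      _ = 1/γ := mul_one _
  -- limit of ε at infinity is 1/γ
  have hs : Tendsto (fun τ : ℝ => (β * τ) ^ α) atTop atTop :=
    (tendsto_rpow_atTop hα).comp (tendsto_id.const_mul_atTop hβ)
  have hfrac : Tendsto (fun x : ℝ => x / (1 + x)) atTop (nhds 1) := by
    have h1 : Tendsto (fun x : ℝ => 1 - (1 + x)⁻¹) atTop (nhds (1 - 0)) :=
      tendsto_const_nhds.sub (tendsto_atTop_add_const_left _ 1 tendsto_id).inv_tendsto_atTop
    rw [sub_zero] at h1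
    refine h1.congr' ?_
    filter_upwards [eventually_gt_atTop (0:ℝ)] with x hx
    have hx1 : (0:ℝ) < 1 + x := by linarith
    field_simp
    ring
  have hrpow : Tendsto (fun x : ℝ => x ^ (1/α)) (nhds 1) (nhds 1) := by
    have := (Real.continuousAt_rpow_const 1 (1/α) (Or.inl one_ne_zero)).tendsto
    simpa using this
  have hlim : Tendsto ε atTop (nhds (1/γ)) := by
    have h2 : Tendsto (fun τ : ℝ => (1/γ) * ((β * τ) ^ α / (1 + (β * τ) ^ α)) ^ (1/α))
        atTop (nhds ((1/γ) * 1)) :=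
      (tendsto_const_nhds.mul ((hrpow.comp (hfrac.comp hs))))
    rw [mul_one] at h2
    refine h2.congr' ?_
    filter_upwards [eventually_ge_atTop (0:ℝ)] with τ hτ
    exact (key τ hτ).symm
  have hlub : IsLUB (ε '' Set.Ici 0) (1/γ) := by
    constructor
    · exact hub
    · intro b hb
      refine le_of_tendsto hlim ?_
      filter_upwards [eventually_ge_atTop (0:ℝ)] with τ hτ
      exact hb ⟨τ, hτ, rfl⟩
  exact hlub.csSup_eq ⟨ε 0, ⟨0, Set.self_mem_Ici, rfl⟩⟩
end

section
/- Concavity of the strain-limiting response: for α ≥ 1 the function g(s) = (s/E)(1+(βs)^α)^(-1/α) is concave on [0, ∞). -/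
open Real

/-- Two-term Hölder inequality for nonnegative reals. -/
lemma holder2 {p q a1 a2 b1 b2 : ℝ} (hpq : Real.HolderConjugate p q)
    (ha1 : 0 ≤ a1) (ha2 : 0 ≤ a2) (hb1 : 0 ≤ b1) (hb2 : 0 ≤ b2) :
    a1 * b1 + a2 * b2 ≤ (a1 ^ p + a2 ^ p) ^ (1 / p) * (b1 ^ q + b2 ^ q) ^ (1 / q) := by
  have := Real.inner_le_Lp_mul_Lq (Finset.univ : Finset (Fin 2))
    ![a1, a2] ![b1, b2] hpq
  simpa [Fin.sum_univ_two, abs_of_nonneg, ha1, ha2, hb1, hb2] using this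

/-- Tangent-line inequality for `h t = t * (1 + t^α)^(-1/α)` at a point `z > 0`. -/
lemma tangent_ineq {α s z : ℝ} (hα : 1 ≤ α) (hs : 0 ≤ s) (hz : 0 < z) :
    s * (1 + s ^ α) ^ (-1 / α) ≤ (s + z ^ (α + 1)) * (1 + z ^ α) ^ (-(α + 1) / α) := by
  have hα0 : 0 < α := lt_of_lt_of_le one_pos hα
  have hα1 : 0 < α + 1 := by linarith
  rcases eq_or_lt_of_le hs with rfl | hs'
  · simp only [zero_mul, zero_add]
    positivity
  -- positivity facts
  have hP : 0 < 1 + s ^ α := by positivity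
  have hQ : 0 < 1 + z ^ α := by positivity
  have hR : 0 < s + z ^ (α + 1) := by positivity
  -- Hölder with p = (α+1)/α, q = α+1
  have hpq : Real.HolderConjugate ((α + 1) / α) (α + 1) := by
    rw [Real.holderConjugate_iff]
    constructor
    · rw [lt_div_iff₀ hα0]; linarith
    · field_simp
  have H := holder2 (a1 := s ^ (α / (α + 1))) (a2 := z ^ α)
      (b1 := 1) (b2 := s ^ (α / (α + 1))) hpq
      (by positivity) (by positivity) zero_le_one (by positivity)
  -- simplify exponents in H
  have e1 : (s ^ (α / (α + 1))) ^ ((α + 1) / α) = s := by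
    have he : α / (α + 1) * ((α + 1) / α) = 1 := by field_simp
    rw [← Real.rpow_mul hs, he, Real.rpow_one]
  have e2 : (z ^ α) ^ ((α + 1) / α) = z ^ (α + 1) := by
    rw [← Real.rpow_mul hz.le]
    congr 1
    field_simp
  have e3 : ((1 : ℝ) ^ (α + 1) : ℝ) = 1 := Real.one_rpow _
  have e4 : (s ^ (α / (α + 1))) ^ (α + 1) = s ^ α := by
    rw [← Real.rpow_mul hs]
    congr 1
    field_simp
  rw [e1, e2, e3, e4, mul_one] at H
  -- H : s^(α/(α+1)) + z^α * s^(α/(α+1))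
  --       ≤ (s + z^(α+1))^(1/((α+1)/α)) * (1 + s^α)^(1/(α+1))
  have hinv : 1 / ((α + 1) / α) = α / (α + 1) := one_div_div _ _
  rw [hinv] at H
  -- rewrite the LHS of H as s^(α/(α+1)) * (1 + z^α)
  have H' : s ^ (α / (α + 1)) * (1 + z ^ α)
      ≤ (s + z ^ (α + 1)) ^ (α / (α + 1)) * (1 + s ^ α) ^ (1 / (α + 1)) := by
    calc s ^ (α / (α + 1)) * (1 + z ^ α)
        = s ^ (α / (α + 1)) + z ^ α * s ^ (α / (α + 1)) := by ring
      _ ≤ _ := H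
  -- raise both sides to the power (α+1)/α
  have Hr := Real.rpow_le_rpow (by positivity) H' (le_of_lt (by positivity : (0:ℝ) < (α+1)/α))
  rw [Real.mul_rpow (by positivity) hQ.le, Real.mul_rpow (by positivity) (by positivity),
    e1, ← Real.rpow_mul hR.le, ← Real.rpow_mul hP.le] at Hr
  have e5 : α / (α + 1) * ((α + 1) / α) = 1 := by field_simp
  have e6 : 1 / (α + 1) * ((α + 1) / α) = 1 / α := by field_simp
  rw [e5, e6, Real.rpow_one] at Hr
  -- Hr : s * (1 + z^α)^((α+1)/α) ≤ (s + z^(α+1)) * (1 + s^α)^(1/α)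
  -- convert target via division
  have hneg1 : (-1 / α : ℝ) = -(1 / α) := by ring
  have hneg2 : (-(α + 1) / α : ℝ) = -((α + 1) / α) := by ring
  rw [hneg1, hneg2, Real.rpow_neg hP.le, Real.rpow_neg hQ.le,
    ← div_eq_mul_inv, ← div_eq_mul_inv]
  rw [div_le_div_iff₀ (by positivity) (by positivity)]
  linarith [Hr]

/-- Two-point concavity for `h t = t * (1 + t^α)^(-1/α)` on nonnegative reals. -/
lemma h_concave_two_point {α x y a b : ℝ} (hα : 1 ≤ α) (hx : 0 ≤ x) (hy : 0 ≤ y)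
    (ha : 0 ≤ a) (hb : 0 ≤ b) (hab : a + b = 1) :
    a * (x * (1 + x ^ α) ^ (-1 / α)) + b * (y * (1 + y ^ α) ^ (-1 / α))
      ≤ (a * x + b * y) * (1 + (a * x + b * y) ^ α) ^ (-1 / α) := by
  have hα0 : 0 < α := lt_of_lt_of_le one_pos hα
  rcases eq_or_lt_of_le ha with rfl | ha'
  · have : b = 1 := by linarith
    subst this; simp
  rcases eq_or_lt_of_le hb with rfl | hb'
  · have : a = 1 := by linarith
    subst this; simp
  set z := a * x + b * y with hzdef
  have hz0 : 0 ≤ z := by positivity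
  rcases eq_or_lt_of_le hz0 with hz | hz
  · -- z = 0 forces x = y = 0
    have hx0 : x = 0 := by nlinarith
    have hy0 : y = 0 := by nlinarith
    simp [hx0, hy0, ← hz]
  have hQ : 0 < 1 + z ^ α := by positivity
  have t1 := tangent_ineq hα hx hz
  have t2 := tangent_ineq hα hy hz
  have key : a * (x * (1 + x ^ α) ^ (-1 / α)) + b * (y * (1 + y ^ α) ^ (-1 / α))
      ≤ (z + z ^ (α + 1)) * (1 + z ^ α) ^ (-(α + 1) / α) := by
    have C0 : 0 ≤ (1 + z ^ α) ^ (-(α + 1) / α) := by positivity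
    have h1 := mul_le_mul_of_nonneg_left t1 ha'.le
    have h2 := mul_le_mul_of_nonneg_left t2 hb'.le
    calc a * (x * (1 + x ^ α) ^ (-1 / α)) + b * (y * (1 + y ^ α) ^ (-1 / α))
        ≤ a * ((x + z ^ (α + 1)) * (1 + z ^ α) ^ (-(α + 1) / α))
          + b * ((y + z ^ (α + 1)) * (1 + z ^ α) ^ (-(α + 1) / α)) := by linarith
      _ = (a * x + b * y + (a + b) * z ^ (α + 1)) * (1 + z ^ α) ^ (-(α + 1) / α) := by ring
      _ = (z + z ^ (α + 1)) * (1 + z ^ α) ^ (-(α + 1) / α) := by rw [hab, hzdef]; ring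
  refine key.trans (le_of_eq ?_)
  -- (z + z^(α+1)) * (1+z^α)^(-(α+1)/α) = z * (1+z^α)^(-1/α)
  have hz1 : z ^ (α + 1) = z * z ^ α := by
    rw [Real.rpow_add hz, Real.rpow_one]; ring
  have e7 : (1 + z ^ α) ^ (-(α + 1) / α)
      = (1 + z ^ α) ^ (-1 / α) * (1 + z ^ α)⁻¹ := by
    rw [← Real.rpow_neg_one (1 + z ^ α), ← Real.rpow_add hQ]
    congr 1
    field_simp
    ring
  rw [hz1, e7]
  field_simp

theorem strain_limiting_concave (E α β : ℝ) (hE : 0 < E) (hα : 1 ≤ α) (hβ : 0 < β)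
    (g : ℝ → ℝ) (hg : ∀ s, g s = (s / E) * (1 + (β * s) ^ α) ^ (-1 / α)) :
    ConcaveOn ℝ (Set.Ici 0) g := by
  constructor
  · exact convex_Ici 0
  · intro x hx y hy a b ha hb hab
    simp only [smul_eq_mul, Set.mem_Ici] at *
    rw [hg, hg, hg]
    have hbx : 0 ≤ β * x := by positivity
    have hby : 0 ≤ β * y := by positivity
    have key := h_concave_two_point (x := β * x) (y := β * y) hα hbx hby ha hb hab
    have hrw : β * (a * x + b * y) = a * (β * x) + b * (β * y) := by ring
    have hEinv : 0 ≤ (E * β)⁻¹ := by positivity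
    have := mul_le_mul_of_nonneg_left key hEinv
    calc a * (x / E * (1 + (β * x) ^ α) ^ (-1 / α))
          + b * (y / E * (1 + (β * y) ^ α) ^ (-1 / α))
        = (E * β)⁻¹ * (a * (β * x * (1 + (β * x) ^ α) ^ (-1 / α))
            + b * (β * y * (1 + (β * y) ^ α) ^ (-1 / α))) := by
          field_simp
      _ ≤ (E * β)⁻¹ * ((a * (β * x) + b * (β * y))
            * (1 + (a * (β * x) + b * (β * y)) ^ α) ^ (-1 / α)) := this
      _ = (a * x + b * y) / E * (1 + (β * (a * x + b * y)) ^ α) ^ (-1 / α) := by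
          rw [← hrw]
          field_simp
end
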